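/- arXiv:2110.09443 — 3 statements merged into one kernel-verified Lean document; each statement's English description precedes it below -/
import Mathlib

section
/- Let G be a simple undirected graph on n vertices with symmetric adjacency matrix A ∈ {0,1}^{n×n} (A_{ii} = 0). For each pair (i,j) let ψ̃_{ij} : ℝⁿ → ℝ be a differentiable nonnegative function such that ∂_{p_k} ψ̃_{ij}(p) = 0 for all p whenever A_{ik} = 0 (condition (ii)). For an embedding Z = (z_1,…,z_n) with z_i ∈ ℝ^D, set P_i(Z) = (‖z_i − z_1‖², …, ‖z_i − z_n‖²) ∈ ℝⁿ, ψ_{ij}^ℓ(Z) = ψ̃_{ij}(P_i(Z)) · (z_j^ℓ − z_i^ℓ)², and define the discrete Polyakov action S[Z] = (1/2) ∑_{ℓ=1}^{D} ∑_{i,j=1}^{n} A_{ij} ψ_{ij}^ℓ(Z). Then for every vertex k and channel r, the partial derivative of S with respect to z_k^r equals ∑_{j : A_{kj}=1} c_{kj}(Z) (z_k^r − z_j^r), where c_{kj}(Z) = ψ̃_{kj}(P_k(Z)) + ψ̃_{jk}(P_j(Z)) + ∑_{p : A_{kp}=1} ∂_{p_j} ψ̃_{kp}(P_k(Z)) ‖z_p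 − z_k‖² + ∑_{p : A_{jp}=1} ∂_{p_k} ψ̃_{jp}(P_j(Z)) ‖z_p − z_j‖². -/
open scoped BigOperators

private lemma polyakov_alg {n : ℕ} (A : Fin n → Fin n → ℝ)
    (hAsym : ∀ i j, A i j = A j i) (hA01 : ∀ i j, A i j = 0 ∨ A i j = 1)
    (k : Fin n) (φ : Fin n → Fin n → ℝ) (d : Fin n → Fin n → Fin n → ℝ)
    (hd : ∀ i j s, A i s = 0 → d i j s = 0)
    (w : Fin n → Fin n → ℝ) (x : Fin n → ℝ) (δ : Fin n → ℝ)
    (hδ : ∀ t, δ t = if t = k then (1:ℝ) else 0) :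
    (1/2) * ∑ i, ∑ j, A i j * ((∑ s, 2*(δ i - δ s)*(x i - x s) * d i j s) * w i j
        + φ i j * (2*(x j - x i)*(δ j - δ i)))
    = ∑ j ∈ Finset.univ.filter (fun j => A k j = 1),
        (φ k j + φ j k
          + (∑ p ∈ Finset.univ.filter (fun p => A k p = 1), d k p j * w k p)
          + (∑ p ∈ Finset.univ.filter (fun p => A j p = 1), d j p k * w j p)) * (x k - x j) := by
  classical
  have hfil : ∀ (i : Fin n) (f : Fin n → ℝ),
      ∑ j ∈ Finset.univ.filter (fun j => A i j = 1), f j = ∑ j, A i j * f j := by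
    intro i f
    rw [Finset.sum_filter]
    refine Finset.sum_congr rfl fun j _ => ?_
    rcases hA01 i j with h | h <;> simp [h]
  have habs : ∀ i j s, A i s * d i j s = d i j s := by
    intro i j s
    rcases hA01 i s with h | h
    · rw [h, hd i j s h]; ring
    · rw [h, one_mul]
  have habs2 : ∀ j p, A k j * d j p k = d j p k := by
    intro j p
    rcases hA01 k j with h | h
    · rw [h, hd j p k (by rw [hAsym j k]; exact h)]; ring
    · rw [h, one_mul]
  simp only [hfil]
  have hsplit : ∑ i, ∑ j, A i j * ((∑ s, 2*(δ i - δ s)*(x i - x s) * d i j s) * w i j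
        + φ i j * (2*(x j - x i)*(δ j - δ i)))
      = (∑ i, ∑ j, A i j * ((∑ s, 2*(δ i - δ s)*(x i - x s) * d i j s) * w i j))
        + (∑ i, ∑ j, A i j * (φ i j * (2*(x j - x i)*(δ j - δ i)))) := by
    simp only [mul_add, Finset.sum_add_distrib]
  have h2 : ∑ i, ∑ j, A i j * (φ i j * (2*(x j - x i)*(δ j - δ i)))
      = 2 * ∑ j, A k j * ((φ k j + φ j k) * (x k - x j)) := by
    have step1 : ∀ i, ∑ j, A i j * (φ i j * (2*(x j - x i)*(δ j - δ i)))
        = (∑ j, (A i j * φ i j * (2*(x j - x i))) * δ j)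
          - (∑ j, A i j * φ i j * (2*(x j - x i))) * δ i := by
      intro i
      rw [Finset.sum_mul, ← Finset.sum_sub_distrib]
      exact Finset.sum_congr rfl fun j _ => by ring
    calc ∑ i, ∑ j, A i j * (φ i j * (2*(x j - x i)*(δ j - δ i)))
        = ∑ i, ((∑ j, (A i j * φ i j * (2*(x j - x i))) * δ j)
            - (∑ j, A i j * φ i j * (2*(x j - x i))) * δ i) :=
          Finset.sum_congr rfl fun i _ => step1 i
      _ = (∑ i, ∑ j, (A i j * φ i j * (2*(x j - x i))) * δ j)
            - ∑ i, (∑ j, A i j * φ i j * (2*(x j - x i))) * δ i := Finset.sum_sub_distrib _ _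
      _ = (∑ i, A i k * φ i k * (2*(x k - x i))) - ∑ j, A k j * φ k j * (2*(x j - x k)) := by
          congr 1
          · exact Finset.sum_congr rfl fun i _ => by simp [hδ]
          · simp [hδ]
      _ = 2 * ∑ j, A k j * ((φ k j + φ j k) * (x k - x j)) := by
          rw [Finset.mul_sum, ← Finset.sum_sub_distrib]
          exact Finset.sum_congr rfl fun j _ => by rw [hAsym j k]; ring
  have h1 : ∑ i, ∑ j, A i j * ((∑ s, 2*(δ i - δ s)*(x i - x s) * d i j s) * w i j)
      = 2 * (∑ j, ∑ s, A k j * w k j * d k j s * (x k - x s))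
        + 2 * (∑ i, ∑ j, A i j * w i j * d i j k * (x k - x i)) := by
    have step1 : ∀ i j, A i j * ((∑ s, 2*(δ i - δ s)*(x i - x s) * d i j s) * w i j)
        = (∑ s, 2 * A i j * w i j * (x i - x s) * d i j s) * δ i
          - ∑ s, (2 * A i j * w i j * (x i - x s) * d i j s) * δ s := by
      intro i j
      rw [Finset.sum_mul, Finset.mul_sum, Finset.sum_mul, ← Finset.sum_sub_distrib]
      exact Finset.sum_congr rfl fun s _ => by ring
    calc ∑ i, ∑ j, A i j * ((∑ s, 2*(δ i - δ s)*(x i - x s) * d i j s) * w i j)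
        = ∑ i, ((∑ j, ∑ s, 2 * A i j * w i j * (x i - x s) * d i j s) * δ i
            - ∑ j, ∑ s, (2 * A i j * w i j * (x i - x s) * d i j s) * δ s) := by
          refine Finset.sum_congr rfl fun i _ => ?_
          rw [Finset.sum_mul, ← Finset.sum_sub_distrib]
          exact Finset.sum_congr rfl fun j _ => step1 i j
      _ = (∑ j, ∑ s, 2 * A k j * w k j * (x k - x s) * d k j s)
            - ∑ i, ∑ j, 2 * A i j * w i j * (x i - x k) * d i j k := by
          rw [Finset.sum_sub_distrib]
          congr 1
          · simp [hδ]
          · refine Finset.sum_congr rfl fun i _ => Finset.sum_congr rfl fun j _ => ?_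
            simp [hδ]
      _ = 2 * (∑ j, ∑ s, A k j * w k j * d k j s * (x k - x s))
            + 2 * (∑ i, ∑ j, A i j * w i j * d i j k * (x k - x i)) := by
          rw [Finset.mul_sum, Finset.mul_sum, ← Finset.sum_add_distrib, ← Finset.sum_sub_distrib]
          refine Finset.sum_congr rfl fun u _ => ?_
          rw [Finset.mul_sum, Finset.mul_sum, ← Finset.sum_add_distrib, ← Finset.sum_sub_distrib]
          refine Finset.sum_congr rfl fun v _ => ?_
          ring
  have I1 : ∑ j, A k j * ((∑ p, A k p * (d k p j * w k p)) * (x k - x j))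
      = ∑ j, ∑ s, A k j * w k j * d k j s * (x k - x s) := by
    calc ∑ j, A k j * ((∑ p, A k p * (d k p j * w k p)) * (x k - x j))
        = ∑ j, ∑ p, A k j * A k p * d k p j * w k p * (x k - x j) := by
          refine Finset.sum_congr rfl fun j _ => ?_
          rw [Finset.sum_mul, Finset.mul_sum]
          exact Finset.sum_congr rfl fun p _ => by ring
      _ = ∑ p, ∑ j, A k j * A k p * d k p j * w k p * (x k - x j) := Finset.sum_comm
      _ = ∑ j, ∑ s, A k j * w k j * d k j s * (x k - x s) := by
          refine Finset.sum_congr rfl fun u _ => Finset.sum_congr rfl fun v _ => ?_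
          rw [show A k v * A k u * d k u v * w k u * (x k - x v)
              = (A k v * d k u v) * A k u * w k u * (x k - x v) from by ring, habs k u v]
          ring
  have I2 : ∑ j, A k j * ((∑ p, A j p * (d j p k * w j p)) * (x k - x j))
      = ∑ i, ∑ j, A i j * w i j * d i j k * (x k - x i) := by
    refine Finset.sum_congr rfl fun u _ => ?_
    rw [Finset.sum_mul, Finset.mul_sum]
    refine Finset.sum_congr rfl fun v _ => ?_
    rw [show A k u * (A u v * (d u v k * w u v) * (x k - x u))
        = (A k u * d u v k) * A u v * w u v * (x k - x u) from by ring, habs2 u v]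
    ring
  have hRHS : (∑ j, A k j * ((φ k j + φ j k) * (x k - x j)))
      + (∑ j, A k j * ((∑ p, A k p * (d k p j * w k p)) * (x k - x j)))
      + (∑ j, A k j * ((∑ p, A j p * (d j p k * w j p)) * (x k - x j)))
      = ∑ j, A k j * ((φ k j + φ j k + (∑ p, A k p * (d k p j * w k p))
          + (∑ p, A j p * (d j p k * w j p))) * (x k - x j)) := by
    rw [← Finset.sum_add_distrib, ← Finset.sum_add_distrib]
    exact Finset.sum_congr rfl fun j _ => by ring
  rw [hsplit, h1, h2, ← hRHS, I1, I2]
  ring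


/-- For a simple undirected graph with 0/1 adjacency matrix `A`,
differentiable nonnegative weights `ψ i j : ℝⁿ → ℝ` whose `k`-th partial derivative
vanishes whenever `A i k = 0`, and the discrete Polyakov action
`S Z = (1/2) ∑_ℓ ∑_{i,j} A i j · ψ i j (P Z i) · (z_j^ℓ − z_i^ℓ)²`
with `P Z i = (‖z_i − z_1‖², …, ‖z_i − z_n‖²)`, the partial derivative of `S`
with respect to `z_k^r` equals `∑_{j : A k j = 1} c k j (Z) · (z_k^r − z_j^r)`. -/
theorem discrete_polyakov_partial_derivative
    (n D : ℕ)
    (A : Fin n → Fin n → ℝ)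
    (hAsym : ∀ i j, A i j = A j i)
    (hAdiag : ∀ i, A i i = 0)
    (hA01 : ∀ i j, A i j = 0 ∨ A i j = 1)
    (ψ : Fin n → Fin n → (Fin n → ℝ) → ℝ)
    (hψdiff : ∀ i j, Differentiable ℝ (ψ i j))
    (hψnonneg : ∀ i j p, 0 ≤ ψ i j p)
    (hψloc : ∀ i j k, A i k = 0 → ∀ p, fderiv ℝ (ψ i j) p (Pi.single k 1) = 0)
    (P : (Fin n → EuclideanSpace ℝ (Fin D)) → Fin n → Fin n → ℝ)
    (hP : ∀ Z i s, P Z i s = ‖Z i - Z s‖ ^ 2)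
    (S : (Fin n → EuclideanSpace ℝ (Fin D)) → ℝ)
    (hS : ∀ Z, S Z = (1 / 2) * ∑ ℓ : Fin D, ∑ i : Fin n, ∑ j : Fin n,
        A i j * (ψ i j (P Z i) * (Z j ℓ - Z i ℓ) ^ 2))
    (c : (Fin n → EuclideanSpace ℝ (Fin D)) → Fin n → Fin n → ℝ)
    (hc : ∀ Z i j, c Z i j =
        ψ i j (P Z i) + ψ j i (P Z j)
        + ∑ p ∈ Finset.univ.filter (fun p => A i p = 1),
            fderiv ℝ (ψ i p) (P Z i) (Pi.single j 1) * ‖Z p - Z i‖ ^ 2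
        + ∑ p ∈ Finset.univ.filter (fun p => A j p = 1),
            fderiv ℝ (ψ j p) (P Z j) (Pi.single i 1) * ‖Z p - Z j‖ ^ 2)
    (Z : Fin n → EuclideanSpace ℝ (Fin D)) (k : Fin n) (r : Fin D) :
    fderiv ℝ S Z (Pi.single k (EuclideanSpace.single r (1 : ℝ))) =
      ∑ j ∈ Finset.univ.filter (fun j => A k j = 1), c Z k j * (Z k r - Z j r) := by

  classical
  set e : Fin n → EuclideanSpace ℝ (Fin D) := Pi.single k (EuclideanSpace.single r (1 : ℝ)) with he
  set pr : Fin n → ((Fin n → EuclideanSpace ℝ (Fin D)) →L[ℝ] EuclideanSpace ℝ (Fin D)) :=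
    fun t => ContinuousLinearMap.proj t with hpr
  set co : Fin n → Fin D → ((Fin n → EuclideanSpace ℝ (Fin D)) →L[ℝ] ℝ) :=
    fun t ℓ => (EuclideanSpace.proj ℓ).comp (pr t) with hco
  set QL : Fin n → ((Fin n → EuclideanSpace ℝ (Fin D)) →L[ℝ] (Fin n → ℝ)) :=
    fun i => ContinuousLinearMap.pi (fun s => 2 • (innerSL ℝ (Z i - Z s)).comp (pr i - pr s)) with hQL
  have hQ : ∀ i, HasFDerivAt (fun W : Fin n → EuclideanSpace ℝ (Fin D) =>
      (fun s => ‖W i - W s‖ ^ 2)) (QL i) Z := by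
    intro i
    apply hasFDerivAt_pi.2
    intro s
    exact ((hasFDerivAt_apply i Z).sub (hasFDerivAt_apply s Z)).norm_sq
  set Q : Fin n → (Fin n → ℝ) := fun i => (fun s => ‖Z i - Z s‖ ^ 2) with hQdef
  set T : Fin D → Fin n → Fin n → ((Fin n → EuclideanSpace ℝ (Fin D)) →L[ℝ] ℝ) :=
    fun ℓ i j => A i j • (ψ i j (Q i) • ((2*(Z j ℓ - Z i ℓ)) • (co j ℓ - co i ℓ))
      + ((Z j ℓ - Z i ℓ)^2) • ((fderiv ℝ (ψ i j) (Q i)).comp (QL i))) with hT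
  have hterm : ∀ (ℓ : Fin D) (i j : Fin n), HasFDerivAt
      (fun W : Fin n → EuclideanSpace ℝ (Fin D) =>
        A i j * (ψ i j (fun s => ‖W i - W s‖ ^ 2) * (W j ℓ - W i ℓ) ^ 2)) (T ℓ i j) Z := by
    intro ℓ i j
    have h2 : HasFDerivAt (fun W : Fin n → EuclideanSpace ℝ (Fin D) =>
        ψ i j (fun s => ‖W i - W s‖ ^ 2)) ((fderiv ℝ (ψ i j) (Q i)).comp (QL i)) Z :=
      ((hψdiff i j (Q i)).hasFDerivAt).comp Z (hQ i)
    have hb : HasFDerivAt (fun W : Fin n → EuclideanSpace ℝ (Fin D) =>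
        W j ℓ - W i ℓ) (co j ℓ - co i ℓ) Z := (co j ℓ - co i ℓ).hasFDerivAt
    have h3 : HasFDerivAt (fun W : Fin n → EuclideanSpace ℝ (Fin D) =>
        (W j ℓ - W i ℓ) ^ 2) ((2*(Z j ℓ - Z i ℓ)) • (co j ℓ - co i ℓ)) Z := by
      have h := hb.mul hb
      simp only [pow_two]
      rw [two_mul, add_smul]
      exact h
    exact (h2.mul h3).const_mul (A i j)
  have hSf : HasFDerivAt S ((1/2 : ℝ) • ∑ ℓ : Fin D, ∑ i : Fin n, ∑ j : Fin n, T ℓ i j) Z := by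
    have hSeq : S = fun W => (1 / 2) * ∑ ℓ : Fin D, ∑ i : Fin n, ∑ j : Fin n,
        A i j * (ψ i j (fun s => ‖W i - W s‖ ^ 2) * (W j ℓ - W i ℓ) ^ 2) := by
      funext W
      rw [hS W]
      congr 1
      refine Finset.sum_congr rfl fun ℓ _ => Finset.sum_congr rfl fun i _ =>
        Finset.sum_congr rfl fun j _ => ?_
      rw [show P W i = fun s => ‖W i - W s‖ ^ 2 from funext (hP W i)]
    rw [hSeq]
    apply HasFDerivAt.const_mul
    apply HasFDerivAt.fun_sum; intro ℓ _
    apply HasFDerivAt.fun_sum; intro i _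
    apply HasFDerivAt.fun_sum; intro j _
    exact hterm ℓ i j
  have hlin : ∀ (i j : Fin n) (v : Fin n → ℝ), (fderiv ℝ (ψ i j) (Q i)) v
      = ∑ s, v s * (fderiv ℝ (ψ i j) (Q i)) (Pi.single s 1) := by
    intro i j v
    conv_lhs => rw [show v = ∑ s, (Pi.single s (v s) : Fin n → ℝ) from (Finset.univ_sum_single v).symm]
    rw [map_sum]
    refine Finset.sum_congr rfl fun s _ => ?_
    have hv : (Pi.single s (v s) : Fin n → ℝ) = v s • (Pi.single s (1:ℝ) : Fin n → ℝ) := by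
      funext t; by_cases h : t = s <;> simp [Pi.single_apply, h]
    rw [hv, map_smul, smul_eq_mul]
  have hsingle : ∀ t : Fin n, e t = (if t = k then (1:ℝ) else 0) • EuclideanSpace.single r (1:ℝ) := by
    intro t; by_cases h : t = k <;> simp [he, Pi.single_apply, h]
  have hinner : ∀ (i s : Fin n), (inner ℝ (Z i - Z s) (e i - e s) : ℝ)
      = ((if i = k then (1:ℝ) else 0) - (if s = k then 1 else 0)) * (Z i r - Z s r) := by
    intro i s
    rw [hsingle i, hsingle s, ← sub_smul, real_inner_smul_right]
    congr 1
    rw [EuclideanSpace.inner_single_right]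
    simp
  have hcoord : ∀ (j : Fin n) (ℓ : Fin D), e j ℓ
      = (if j = k then (1:ℝ) else 0) * (if ℓ = r then 1 else 0) := by
    intro j ℓ
    by_cases h : j = k <;> simp [he, Pi.single_apply, h, EuclideanSpace.single_apply]
  have hQLe : ∀ (i s : Fin n), QL i e s
      = 2*((if i = k then (1:ℝ) else 0) - (if s = k then 1 else 0)) * (Z i r - Z s r) := by
    intro i s
    rw [hQL]
    simp only [ContinuousLinearMap.pi_apply, ContinuousLinearMap.smul_apply,
      ContinuousLinearMap.coe_comp', Function.comp_apply, ContinuousLinearMap.sub_apply,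
      innerSL_apply_apply, smul_eq_mul]
    rw [show (pr i) e - (pr s) e = e i - e s from rfl, hinner i s]
    ring
  have hTval : ∀ (ℓ : Fin D) (i j : Fin n), (T ℓ i j) e
      = A i j * (ψ i j (Q i) * ((2*(Z j ℓ - Z i ℓ)) * (e j ℓ - e i ℓ))
        + (Z j ℓ - Z i ℓ)^2 * ∑ s, 2*((if i = k then (1:ℝ) else 0) - (if s = k then 1 else 0)) * (Z i r - Z s r) * (fderiv ℝ (ψ i j) (Q i)) (Pi.single s 1)) := by
    intro ℓ i j
    have h0 : (T ℓ i j) e = A i j * (ψ i j (Q i) * ((2*(Z j ℓ - Z i ℓ)) * (e j ℓ - e i ℓ))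
        + (Z j ℓ - Z i ℓ)^2 * (fderiv ℝ (ψ i j) (Q i)) (QL i e)) := rfl
    rw [h0, hlin i j]
    simp only [hQLe]
  have hval : fderiv ℝ S Z e = (1/2) * ∑ ℓ : Fin D, ∑ i : Fin n, ∑ j : Fin n, (T ℓ i j) e := by
    rw [hSf.fderiv]
    simp [ContinuousLinearMap.sum_apply]
  have hW : ∀ i j : Fin n, ∑ ℓ : Fin D, (Z j ℓ - Z i ℓ)^2 = ‖Z j - Z i‖^2 := by
    intro i j
    rw [← real_inner_self_eq_norm_sq, PiLp.inner_apply]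
    refine Finset.sum_congr rfl fun ℓ _ => ?_
    simp [pow_two]
  have hbridge : (1/2 : ℝ) * ∑ ℓ : Fin D, ∑ i : Fin n, ∑ j : Fin n, (T ℓ i j) e
      = (1/2) * ∑ i : Fin n, ∑ j : Fin n, A i j *
          ((∑ s, 2*((if i = k then (1:ℝ) else 0) - (if s = k then 1 else 0))*(Z i r - Z s r)
              * (fderiv ℝ (ψ i j) (Q i)) (Pi.single s 1)) * ‖Z j - Z i‖^2
            + ψ i j (Q i) * (2*(Z j r - Z i r)*((if j = k then (1:ℝ) else 0) - (if i = k then 1 else 0)))) := by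
    congr 1
    rw [Finset.sum_comm]
    refine Finset.sum_congr rfl fun i _ => ?_
    rw [Finset.sum_comm]
    refine Finset.sum_congr rfl fun j _ => ?_
    simp only [hTval]
    rw [← Finset.mul_sum]
    congr 1
    have p1 : ∑ ℓ : Fin D, ψ i j (Q i) * ((2*(Z j ℓ - Z i ℓ)) * (e j ℓ - e i ℓ))
        = ψ i j (Q i) * (2*(Z j r - Z i r)*((if j = k then (1:ℝ) else 0) - (if i = k then 1 else 0))) := by
      rw [← Finset.mul_sum]
      congr 1
      have hite : ∀ ℓ : Fin D, (2*(Z j ℓ - Z i ℓ)) * (e j ℓ - e i ℓ)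
          = if ℓ = r then 2*(Z j r - Z i r)*((if j = k then (1:ℝ) else 0) - (if i = k then 1 else 0)) else 0 := by
        intro ℓ
        rw [hcoord, hcoord]
        by_cases h : ℓ = r
        · simp [h]
        · simp [h]
      rw [Finset.sum_congr rfl (fun ℓ _ => hite ℓ)]
      simp
    have p2 : ∑ ℓ : Fin D, (Z j ℓ - Z i ℓ)^2 *
        (∑ s, 2*((if i = k then (1:ℝ) else 0) - (if s = k then 1 else 0)) * (Z i r - Z s r)
          * (fderiv ℝ (ψ i j) (Q i)) (Pi.single s 1))
        = (∑ s, 2*((if i = k then (1:ℝ) else 0) - (if s = k then 1 else 0))*(Z i r - Z s r)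
            * (fderiv ℝ (ψ i j) (Q i)) (Pi.single s 1)) * ‖Z j - Z i‖^2 := by
      rw [← Finset.sum_mul, hW i j]
      ring
    rw [Finset.sum_add_distrib, p1, p2]
    ring
  have hd' : ∀ i j s : Fin n, A i s = 0 → (fderiv ℝ (ψ i j) (Q i)) (Pi.single s 1) = 0 :=
    fun i j s h => hψloc i j s h (Q i)
  have halg := polyakov_alg A hAsym hA01 k (fun i j => ψ i j (Q i))
    (fun i j s => (fderiv ℝ (ψ i j) (Q i)) (Pi.single s 1)) hd'
    (fun i j => ‖Z j - Z i‖^2) (fun t => Z t r)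
    (fun t => if t = k then (1:ℝ) else 0) (fun t => rfl)
  have hQP : ∀ i, Q i = P Z i := fun i => (funext (hP Z i)).symm
  have hfinal : (∑ j ∈ Finset.univ.filter (fun j => A k j = 1),
        (ψ k j (Q k) + ψ j k (Q j)
          + (∑ p ∈ Finset.univ.filter (fun p => A k p = 1),
              (fderiv ℝ (ψ k p) (Q k)) (Pi.single j 1) * ‖Z p - Z k‖^2)
          + (∑ p ∈ Finset.univ.filter (fun p => A j p = 1),
              (fderiv ℝ (ψ j p) (Q j)) (Pi.single k 1) * ‖Z p - Z j‖^2)) * (Z k r - Z j r))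
      = ∑ j ∈ Finset.univ.filter (fun j => A k j = 1), c Z k j * (Z k r - Z j r) := by
    refine Finset.sum_congr rfl fun j _ => ?_
    rw [hc Z k j]
    simp only [hQP]
  exact hval.trans (hbridge.trans (halg.trans hfinal))
end

section
/- Let G be a simple undirected graph on n vertices with symmetric adjacency matrix A ∈ {0,1}^{n×n} (A_{ii} = 0), and let ψ̃_{ij} : ℝⁿ → ℝ be differentiable nonnegative functions satisfying ∂_{p_k} ψ̃_{ij}(p) = 0 for all p whenever A_{ik} = 0. Define the discrete Polyakov action S[Z] = (1/2) ∑_{ℓ=1}^{D} ∑_{i,j=1}^{n} A_{ij} ψ̃_{ij}(P_i(Z)) (z_j^ℓ − z_i^ℓ)², where P_i(Z) = (‖z_i − z_1‖², …, ‖z_i − z_n‖²). Then a curve t ↦ Z(t) = (z_1(t),…,z_n(t)) of embeddings solves the (negative) gradient flow dz_k^r/dt = −∂S/∂z_k^r (for all k, r, t ≥ 0) if and only if it solves the graph Beltrami flow dz_k/dt = ∑_{j : A_{kj}=1} c_{kj}(Z(t)) (z_j(t) − z_k(t)), where c_{kj}(Z) = ψ̃_{kj}(P_k(Z)) + ψ̃_{jk}(P_j(Z))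 + ∑_{p : A_{kp}=1} ∂_{p_j} ψ̃_{kp}(P_k(Z)) ‖z_p − z_k‖² + ∑_{p : A_{jp}=1} ∂_{p_k} ψ̃_{jp}(P_j(Z)) ‖z_p − z_j‖². -/
open scoped BigOperators

lemma clm_eval_sum {n : ℕ} (φ : (Fin n → ℝ) →L[ℝ] ℝ) (v : Fin n → ℝ) :
    φ v = ∑ s : Fin n, v s * φ (Pi.single s 1) := by
  conv_lhs => rw [← Finset.univ_sum_single v]
  rw [map_sum]
  refine Finset.sum_congr rfl fun s _ => ?_
  have hh : Pi.single s (v s) = v s • (Pi.single s 1 : Fin n → ℝ) := by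
    funext t; by_cases h : t = s <;> simp [Pi.single_apply, h]
  rw [hh, map_smul, smul_eq_mul]

theorem key {n D : ℕ} (A : Fin n → Fin n → ℝ)
    (hAsym : ∀ i j, A i j = A j i)
    (hA01 : ∀ i j, A i j = 0 ∨ A i j = 1)
    (ψ : Fin n → Fin n → (Fin n → ℝ) → ℝ)
    (hψdiff : ∀ i j, Differentiable ℝ (ψ i j))
    (hψloc : ∀ i j k, A i k = 0 → ∀ p, fderiv ℝ (ψ i j) p (Pi.single k 1) = 0)
    (Z0 : Fin n → EuclideanSpace ℝ (Fin D)) (k : Fin n) (u : EuclideanSpace ℝ (Fin D)) :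
    fderiv ℝ (fun Z : Fin n → EuclideanSpace ℝ (Fin D) =>
        (1/2 : ℝ) * ∑ i : Fin n, ∑ j : Fin n,
          A i j * (ψ i j (fun s => ‖Z i - Z s‖ ^ 2) * ‖Z j - Z i‖ ^ 2)) Z0 (Pi.single k u)
      = -∑ j ∈ Finset.univ.filter (fun j => A k j = 1),
          ((ψ k j (fun s => ‖Z0 k - Z0 s‖ ^ 2) + ψ j k (fun s => ‖Z0 j - Z0 s‖ ^ 2)
            + ∑ p ∈ Finset.univ.filter (fun p => A k p = 1),
                fderiv ℝ (ψ k p) (fun s => ‖Z0 k - Z0 s‖ ^ 2) (Pi.single j 1) * ‖Z0 p - Z0 k‖ ^ 2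
            + ∑ p ∈ Finset.univ.filter (fun p => A j p = 1),
                fderiv ℝ (ψ j p) (fun s => ‖Z0 j - Z0 s‖ ^ 2) (Pi.single k 1) * ‖Z0 p - Z0 j‖ ^ 2)
           * (inner ℝ (Z0 j - Z0 k) u : ℝ)) := by
  classical
  set e : Fin n → EuclideanSpace ℝ (Fin D) := Pi.single k u with he
  let pr : Fin n → (Fin n → EuclideanSpace ℝ (Fin D)) →L[ℝ] EuclideanSpace ℝ (Fin D) :=
    fun i => ContinuousLinearMap.proj i
  let dn : Fin n → Fin n → (Fin n → EuclideanSpace ℝ (Fin D)) →L[ℝ] ℝ :=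
    fun i s => 2 • (innerSL ℝ (Z0 i - Z0 s)).comp (pr i - pr s)
  have hns : ∀ i s, HasFDerivAt
      (fun Z : Fin n → EuclideanSpace ℝ (Fin D) => ‖Z i - Z s‖ ^ 2) (dn i s) Z0 := by
    intro i s
    exact ((pr i).hasFDerivAt.sub (pr s).hasFDerivAt).norm_sq
  let Pi' : Fin n → (Fin n → EuclideanSpace ℝ (Fin D)) →L[ℝ] (Fin n → ℝ) :=
    fun i => ContinuousLinearMap.pi (fun s => dn i s)
  have hPmap : ∀ i, HasFDerivAt
      (fun Z : Fin n → EuclideanSpace ℝ (Fin D) => (fun s => ‖Z i - Z s‖ ^ 2 : Fin n → ℝ))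
      (Pi' i) Z0 := fun i => hasFDerivAt_pi.mpr (fun s => hns i s)
  let d : Fin n → Fin n → (Fin n → ℝ) →L[ℝ] ℝ :=
    fun i j => fderiv ℝ (ψ i j) (fun s => ‖Z0 i - Z0 s‖ ^ 2)
  have hcomp : ∀ i j, HasFDerivAt
      (fun Z : Fin n → EuclideanSpace ℝ (Fin D) => ψ i j (fun s => ‖Z i - Z s‖ ^ 2))
      ((d i j).comp (Pi' i)) Z0 :=
    fun i j => ((hψdiff i j).differentiableAt.hasFDerivAt).comp Z0 (hPmap i)
  let L : (Fin n → EuclideanSpace ℝ (Fin D)) →L[ℝ] ℝ :=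
    (1/2 : ℝ) • ∑ i : Fin n, ∑ j : Fin n,
      A i j • (ψ i j (fun s => ‖Z0 i - Z0 s‖ ^ 2) • dn j i
        + (‖Z0 j - Z0 i‖ ^ 2) • ((d i j).comp (Pi' i)))
  have hL : HasFDerivAt (fun Z : Fin n → EuclideanSpace ℝ (Fin D) =>
      (1/2 : ℝ) * ∑ i : Fin n, ∑ j : Fin n,
        A i j * (ψ i j (fun s => ‖Z i - Z s‖ ^ 2) * ‖Z j - Z i‖ ^ 2)) L Z0 := by
    apply HasFDerivAt.const_mul ?_ ((1:ℝ)/2)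
    apply HasFDerivAt.fun_sum; intro i _
    apply HasFDerivAt.fun_sum; intro j _
    exact ((hcomp i j).mul (hns j i)).const_mul (A i j)
  rw [hL.fderiv]
  have hPe : ∀ i, (Pi' i) e = fun s => 2 * (inner ℝ (Z0 i - Z0 s) (e i - e s) : ℝ) := by
    intro i; funext s
    simp only [Pi', dn, pr, ContinuousLinearMap.pi_apply, ContinuousLinearMap.smul_apply,
      ContinuousLinearMap.comp_apply, ContinuousLinearMap.sub_apply,
      ContinuousLinearMap.proj_apply, innerSL_apply_apply, nsmul_eq_mul, Nat.cast_ofNat]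
  have hLe : L e = (1/2 : ℝ) * ∑ i : Fin n, ∑ j : Fin n,
      A i j * (ψ i j (fun s => ‖Z0 i - Z0 s‖ ^ 2) * (2 * (inner ℝ (Z0 j - Z0 i) (e j - e i) : ℝ))
        + ‖Z0 j - Z0 i‖ ^ 2 *
            d i j (fun s => 2 * (inner ℝ (Z0 i - Z0 s) (e i - e s) : ℝ))) := by
    simp only [L, ContinuousLinearMap.smul_apply, ContinuousLinearMap.sum_apply,
      ContinuousLinearMap.add_apply, ContinuousLinearMap.comp_apply, hPe,
      smul_eq_mul]
    simp only [dn, pr, ContinuousLinearMap.smul_apply, ContinuousLinearMap.comp_apply,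
      ContinuousLinearMap.sub_apply, ContinuousLinearMap.proj_apply, innerSL_apply_apply,
      nsmul_eq_mul, Nat.cast_ofNat]
  -- abbreviations
  rw [hLe]
  have sumA : ∀ (m : Fin n) (a : Fin n → ℝ),
      (∑ j ∈ Finset.univ.filter (fun j => A m j = 1), a j) = ∑ j : Fin n, A m j * a j := by
    intro m a
    rw [Finset.sum_filter]
    refine Finset.sum_congr rfl fun j _ => ?_
    rcases hA01 m j with h | h <;> simp [h]
  have hinner : ∀ i j : Fin n, (inner ℝ (Z0 j - Z0 i) (e j - e i) : ℝ)
      = (if j = k then (inner ℝ (Z0 j - Z0 i) u : ℝ) else 0)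
        - (if i = k then (inner ℝ (Z0 j - Z0 i) u : ℝ) else 0) := by
    intro i j
    by_cases hik : i = k <;> by_cases hjk : j = k <;>
      simp [he, hik, hjk, Pi.single_apply, inner_sub_right]
  have hq : ∀ i : Fin n, (fun s => 2 * (inner ℝ (Z0 i - Z0 s) (e i - e s) : ℝ))
      = (if i = k then (fun s => 2 * (inner ℝ (Z0 k - Z0 s) u : ℝ)) else (0 : Fin n → ℝ))
        - Pi.single k (2 * (inner ℝ (Z0 i - Z0 k) u : ℝ)) := by
    intro i
    funext s
    by_cases hik : i = k <;> by_cases hsk : s = k <;>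
      simp [he, hik, hsk, Pi.single_apply, inner_sub_right] <;> ring
  have hd : ∀ i j : Fin n,
      d i j ((if i = k then (fun s => 2 * (inner ℝ (Z0 k - Z0 s) u : ℝ)) else (0 : Fin n → ℝ))
        - Pi.single k (2 * (inner ℝ (Z0 i - Z0 k) u : ℝ)))
      = (if i = k then d i j (fun s => 2 * (inner ℝ (Z0 k - Z0 s) u : ℝ)) else 0)
        - 2 * (inner ℝ (Z0 i - Z0 k) u : ℝ) * d i j (Pi.single k 1) := by
    intro i j
    rw [map_sub]
    have h1 : d i j (if i = k then (fun s => 2 * (inner ℝ (Z0 k - Z0 s) u : ℝ)) else (0 : Fin n → ℝ))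
        = (if i = k then d i j (fun s => 2 * (inner ℝ (Z0 k - Z0 s) u : ℝ)) else 0) := by
      by_cases hik : i = k <;> simp [hik]
    have h2 : (Pi.single k (2 * (inner ℝ (Z0 i - Z0 k) u : ℝ)) : Fin n → ℝ)
        = (2 * (inner ℝ (Z0 i - Z0 k) u : ℝ)) • (Pi.single k 1 : Fin n → ℝ) := by
      funext t; by_cases h : t = k <;> simp [Pi.single_apply, h]
    rw [h1, h2, map_smul, smul_eq_mul]
  -- Step 1: pointwise rewrite of each (i,j) term
  have step1 : ∀ i j : Fin n,
      A i j * (ψ i j (fun s => ‖Z0 i - Z0 s‖ ^ 2) * (2 * (inner ℝ (Z0 j - Z0 i) (e j - e i) : ℝ))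
        + ‖Z0 j - Z0 i‖ ^ 2 * d i j (fun s => 2 * (inner ℝ (Z0 i - Z0 s) (e i - e s) : ℝ)))
      = ((if j = k then A i j * ψ i j (fun s => ‖Z0 i - Z0 s‖ ^ 2) * (2 * (inner ℝ (Z0 j - Z0 i) u : ℝ)) else 0)
        - (if i = k then A i j * ψ i j (fun s => ‖Z0 i - Z0 s‖ ^ 2) * (2 * (inner ℝ (Z0 j - Z0 i) u : ℝ)) else 0)
        + (if i = k then A i j * (‖Z0 j - Z0 i‖ ^ 2 * d i j (fun s => 2 * (inner ℝ (Z0 k - Z0 s) u : ℝ))) else 0))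
        - A i j * (‖Z0 j - Z0 i‖ ^ 2 * (2 * (inner ℝ (Z0 i - Z0 k) u : ℝ) * d i j (Pi.single k 1))) := by
    intro i j
    rw [hinner i j, hq i, hd i j]
    by_cases hik : i = k <;> by_cases hjk : j = k <;> simp only [hik, hjk, if_true, if_pos,
      if_neg, ite_true, ite_false] <;> first
      | ring
      | (simp only [if_pos rfl]; ring)
      | (rw [if_neg hik]; ring)
      | (rw [if_neg hjk]; ring)
      | (rw [if_neg hik, if_neg hjk]; ring)
  -- Piece A
  have pieceA : (∑ i : Fin n, ∑ j : Fin n, if j = k then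
        A i j * ψ i j (fun s => ‖Z0 i - Z0 s‖ ^ 2) * (2 * (inner ℝ (Z0 j - Z0 i) u : ℝ)) else 0)
      = ∑ j : Fin n, A k j * (ψ j k (fun s => ‖Z0 j - Z0 s‖ ^ 2) * (-2 * (inner ℝ (Z0 j - Z0 k) u : ℝ))) := by
    have h1 : ∀ i : Fin n, (∑ j : Fin n, if j = k then
        A i j * ψ i j (fun s => ‖Z0 i - Z0 s‖ ^ 2) * (2 * (inner ℝ (Z0 j - Z0 i) u : ℝ)) else 0)
        = A i k * ψ i k (fun s => ‖Z0 i - Z0 s‖ ^ 2) * (2 * (inner ℝ (Z0 k - Z0 i) u : ℝ)) := by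
      intro i; rw [Finset.sum_ite_eq' Finset.univ k]; simp
    rw [Finset.sum_congr rfl fun i _ => h1 i]
    refine Finset.sum_congr rfl fun i _ => ?_
    rw [hAsym i k, ← neg_sub (Z0 i) (Z0 k), inner_neg_left]
    ring
  -- Piece B
  have pieceB : (∑ i : Fin n, ∑ j : Fin n, if i = k then
        A i j * ψ i j (fun s => ‖Z0 i - Z0 s‖ ^ 2) * (2 * (inner ℝ (Z0 j - Z0 i) u : ℝ)) else 0)
      = ∑ j : Fin n, A k j * (ψ k j (fun s => ‖Z0 k - Z0 s‖ ^ 2) * (2 * (inner ℝ (Z0 j - Z0 k) u : ℝ))) := by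
    rw [Finset.sum_comm]
    refine Finset.sum_congr rfl fun j _ => ?_
    rw [Finset.sum_ite_eq' Finset.univ k]; simp; ring
  -- Piece C
  have pieceC : (∑ i : Fin n, ∑ j : Fin n, if i = k then
        A i j * (‖Z0 j - Z0 i‖ ^ 2 * d i j (fun s => 2 * (inner ℝ (Z0 k - Z0 s) u : ℝ))) else 0)
      = ∑ j : Fin n, A k j * ((-2 * (inner ℝ (Z0 j - Z0 k) u : ℝ)) *
          (∑ p : Fin n, A k p * (fderiv ℝ (ψ k p) (fun s => ‖Z0 k - Z0 s‖ ^ 2) (Pi.single j 1)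
            * ‖Z0 p - Z0 k‖ ^ 2))) := by
    rw [Finset.sum_comm]
    have h1 : ∀ j : Fin n, (∑ i : Fin n, if i = k then
        A i j * (‖Z0 j - Z0 i‖ ^ 2 * d i j (fun s => 2 * (inner ℝ (Z0 k - Z0 s) u : ℝ))) else 0)
        = A k j * (‖Z0 j - Z0 k‖ ^ 2 * d k j (fun s => 2 * (inner ℝ (Z0 k - Z0 s) u : ℝ))) := by
      intro j; rw [Finset.sum_ite_eq' Finset.univ k]; simp
    rw [Finset.sum_congr rfl fun j _ => h1 j]
    have h2 : ∀ j : Fin n, A k j * (‖Z0 j - Z0 k‖ ^ 2 * d k j (fun s => 2 * (inner ℝ (Z0 k - Z0 s) u : ℝ)))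
        = ∑ s' : Fin n, (2 * (inner ℝ (Z0 k - Z0 s') u : ℝ)) * (A k j * (d k j (Pi.single s' 1) * ‖Z0 j - Z0 k‖ ^ 2)) := by
      intro j
      rw [clm_eval_sum (d k j) (fun s => 2 * (inner ℝ (Z0 k - Z0 s) u : ℝ)), Finset.mul_sum, Finset.mul_sum]
      exact Finset.sum_congr rfl fun s' _ => by ring
    rw [Finset.sum_congr rfl fun j _ => h2 j, Finset.sum_comm]
    refine Finset.sum_congr rfl fun s' _ => ?_
    rw [← Finset.mul_sum]
    have hflip : (inner ℝ (Z0 k - Z0 s') u : ℝ) = -(inner ℝ (Z0 s' - Z0 k) u : ℝ) := by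
      rw [← neg_sub (Z0 s') (Z0 k), inner_neg_left]
    have hdd : (∑ j' : Fin n, A k j' * (d k j' (Pi.single s' 1) * ‖Z0 j' - Z0 k‖ ^ 2))
        = ∑ p : Fin n, A k p * (fderiv ℝ (ψ k p) (fun s => ‖Z0 k - Z0 s‖ ^ 2) (Pi.single s' 1)
            * ‖Z0 p - Z0 k‖ ^ 2) := by
      simp only [d]
    rw [hdd, hflip]
    rcases hA01 k s' with h | h
    · have hz : (∑ p : Fin n, A k p * (fderiv ℝ (ψ k p) (fun s => ‖Z0 k - Z0 s‖ ^ 2) (Pi.single s' 1)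
            * ‖Z0 p - Z0 k‖ ^ 2)) = 0 :=
        Finset.sum_eq_zero fun p _ => by rw [hψloc k p s' h]; ring
      rw [hz, h]; ring
    · rw [h]; ring
  -- Piece D
  have pieceD : (∑ i : Fin n, ∑ j : Fin n,
        A i j * (‖Z0 j - Z0 i‖ ^ 2 * (2 * (inner ℝ (Z0 i - Z0 k) u : ℝ) * d i j (Pi.single k 1))))
      = ∑ j : Fin n, A k j * ((2 * (inner ℝ (Z0 j - Z0 k) u : ℝ)) *
          (∑ p : Fin n, A j p * (fderiv ℝ (ψ j p) (fun s => ‖Z0 j - Z0 s‖ ^ 2) (Pi.single k 1)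
            * ‖Z0 p - Z0 j‖ ^ 2))) := by
    refine Finset.sum_congr rfl fun i _ => ?_
    rcases hA01 k i with h | h
    · have hik : A i k = 0 := by rw [hAsym]; exact h
      have hz : ∀ j ∈ Finset.univ, A i j * (‖Z0 j - Z0 i‖ ^ 2 *
          (2 * (inner ℝ (Z0 i - Z0 k) u : ℝ) * d i j (Pi.single k 1))) = 0 := by
        intro j _
        have : d i j (Pi.single k 1) = 0 := by simp only [d]; exact hψloc i j k hik _
        rw [this]; ring
      rw [Finset.sum_eq_zero hz, h]; ring
    · rw [h, one_mul, Finset.mul_sum]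
      refine Finset.sum_congr rfl fun j _ => ?_
      simp only [d]; ring
  -- Assemble
  simp only [sumA]
  rw [Finset.sum_congr rfl fun (i : Fin n) _ => Finset.sum_congr rfl fun (j : Fin n) _ => step1 i j]
  simp only [Finset.sum_sub_distrib, Finset.sum_add_distrib]
  rw [pieceA, pieceB, pieceC, pieceD]
  rw [← Finset.sum_sub_distrib, ← Finset.sum_add_distrib, ← Finset.sum_sub_distrib,
    Finset.mul_sum, ← Finset.sum_neg_distrib]
  refine Finset.sum_congr rfl fun j _ => ?_
  ring

/-- With the discrete Polyakov action
`S Z = (1/2) ∑_ℓ ∑_{i,j} A i j · ψ i j (P Z i) · (z_j^ℓ − z_i^ℓ)²` for a 0/1 symmetric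
adjacency matrix `A` and differentiable nonnegative weights `ψ` whose `k`-th partial
derivative vanishes when `A i k = 0`, a curve `t ↦ Z t` of embeddings solves the
negative gradient flow `d z_k^r / dt = −∂S/∂z_k^r` (for all `k, r, t ≥ 0`) if and
only if it solves the graph Beltrami flow
`d z_k / dt = ∑_{j : A k j = 1} c k j (Z t) • (z_j − z_k)`. -/
theorem polyakov_gradient_flow_iff_beltrami_flow
    (n D : ℕ)
    (A : Fin n → Fin n → ℝ)
    (hAsym : ∀ i j, A i j = A j i)
    (hAdiag : ∀ i, A i i = 0)
    (hA01 : ∀ i j, A i j = 0 ∨ A i j = 1)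
    (ψ : Fin n → Fin n → (Fin n → ℝ) → ℝ)
    (hψdiff : ∀ i j, Differentiable ℝ (ψ i j))
    (hψnonneg : ∀ i j p, 0 ≤ ψ i j p)
    (hψloc : ∀ i j k, A i k = 0 → ∀ p, fderiv ℝ (ψ i j) p (Pi.single k 1) = 0)
    (P : (Fin n → EuclideanSpace ℝ (Fin D)) → Fin n → Fin n → ℝ)
    (hP : ∀ Z i s, P Z i s = ‖Z i - Z s‖ ^ 2)
    (S : (Fin n → EuclideanSpace ℝ (Fin D)) → ℝ)
    (hS : ∀ Z, S Z = (1 / 2) * ∑ ℓ : Fin D, ∑ i : Fin n, ∑ j : Fin n,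
        A i j * (ψ i j (P Z i) * (Z j ℓ - Z i ℓ) ^ 2))
    (c : (Fin n → EuclideanSpace ℝ (Fin D)) → Fin n → Fin n → ℝ)
    (hc : ∀ Z i j, c Z i j =
        ψ i j (P Z i) + ψ j i (P Z j)
        + ∑ p ∈ Finset.univ.filter (fun p => A i p = 1),
            fderiv ℝ (ψ i p) (P Z i) (Pi.single j 1) * ‖Z p - Z i‖ ^ 2
        + ∑ p ∈ Finset.univ.filter (fun p => A j p = 1),
            fderiv ℝ (ψ j p) (P Z j) (Pi.single i 1) * ‖Z p - Z j‖ ^ 2)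
    (Z : ℝ → Fin n → EuclideanSpace ℝ (Fin D)) :
    (∀ (k : Fin n) (r : Fin D) (t : ℝ), 0 ≤ t →
        HasDerivAt (fun s => Z s k r)
          (-(fderiv ℝ S (Z t) (Pi.single k (EuclideanSpace.single r (1 : ℝ))))) t)
    ↔
    (∀ (k : Fin n) (t : ℝ), 0 ≤ t →
        HasDerivAt (fun s => Z s k)
          (∑ j ∈ Finset.univ.filter (fun j => A k j = 1),
            c (Z t) k j • (Z t j - Z t k)) t) := by
  classical
  -- P is explicit
  have hPZ : ∀ (W : Fin n → EuclideanSpace ℝ (Fin D)) (i : Fin n),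
      P W i = fun s => ‖W i - W s‖ ^ 2 := fun W i => funext fun s => hP W i s
  -- S equals the norm form
  have hSF : S = fun W : Fin n → EuclideanSpace ℝ (Fin D) =>
      (1/2 : ℝ) * ∑ i : Fin n, ∑ j : Fin n,
        A i j * (ψ i j (fun s => ‖W i - W s‖ ^ 2) * ‖W j - W i‖ ^ 2) := by
    funext W
    rw [hS W]
    congr 1
    rw [Finset.sum_comm]
    refine Finset.sum_congr rfl fun i _ => ?_
    rw [Finset.sum_comm]
    refine Finset.sum_congr rfl fun j _ => ?_
    rw [hPZ W i]
    have hnorm : ‖W j - W i‖ ^ 2 = ∑ ℓ : Fin D, (W j ℓ - W i ℓ) ^ 2 := by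
      rw [EuclideanSpace.norm_eq, Real.sq_sqrt (by positivity)]
      refine Finset.sum_congr rfl fun ℓ _ => ?_
      rw [Real.norm_eq_abs, sq_abs]
      congr 1
    rw [hnorm, Finset.mul_sum, Finset.mul_sum]
  -- value of the gradient
  have hkey : ∀ (W : Fin n → EuclideanSpace ℝ (Fin D)) (k : Fin n) (r : Fin D),
      fderiv ℝ S W (Pi.single k (EuclideanSpace.single r (1:ℝ)))
        = -∑ j ∈ Finset.univ.filter (fun j => A k j = 1),
            c W k j * ((W j - W k) r) := by
    intro W k r
    rw [hSF, key A hAsym hA01 ψ hψdiff hψloc W k (EuclideanSpace.single r (1:ℝ))]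
    congr 1
    refine Finset.sum_congr rfl fun j _ => ?_
    have hin : (inner ℝ (W j - W k) (EuclideanSpace.single r (1:ℝ)) : ℝ) = (W j - W k) r := by
      rw [EuclideanSpace.inner_single_right]; simp
    rw [hin, hc W k j, hPZ W k, hPZ W j]
  -- componentwise value of the Beltrami vector field
  have hVr : ∀ (W : Fin n → EuclideanSpace ℝ (Fin D)) (k : Fin n) (r : Fin D),
      (∑ j ∈ Finset.univ.filter (fun j => A k j = 1), c W k j • (W j - W k)) r
        = ∑ j ∈ Finset.univ.filter (fun j => A k j = 1), c W k j * ((W j - W k) r) := by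
    intro W k r
    calc (∑ j ∈ Finset.univ.filter (fun j => A k j = 1), c W k j • (W j - W k)) r
        = EuclideanSpace.proj (𝕜 := ℝ) r
            (∑ j ∈ Finset.univ.filter (fun j => A k j = 1), c W k j • (W j - W k)) := rfl
      _ = ∑ j ∈ Finset.univ.filter (fun j => A k j = 1),
            EuclideanSpace.proj (𝕜 := ℝ) r (c W k j • (W j - W k)) := map_sum _ _ _
      _ = ∑ j ∈ Finset.univ.filter (fun j => A k j = 1), c W k j * ((W j - W k) r) := by
            refine Finset.sum_congr rfl fun j _ => ?_
            simp [smul_eq_mul]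
  constructor
  · intro h k t ht
    have hcomp : HasDerivAt (fun s => (PiLp.continuousLinearEquiv 2 ℝ (fun _ : Fin D => ℝ)) (Z s k))
        ((PiLp.continuousLinearEquiv 2 ℝ (fun _ : Fin D => ℝ))
          (∑ j ∈ Finset.univ.filter (fun j => A k j = 1), c (Z t) k j • (Z t j - Z t k))) t := by
      rw [hasDerivAt_pi]
      intro r
      have h1 := h k r t ht
      rw [hkey (Z t) k r, neg_neg] at h1
      have h2 : ((PiLp.continuousLinearEquiv 2 ℝ (fun _ : Fin D => ℝ))
          (∑ j ∈ Finset.univ.filter (fun j => A k j = 1), c (Z t) k j • (Z t j - Z t k))) r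
          = ∑ j ∈ Finset.univ.filter (fun j => A k j = 1), c (Z t) k j * ((Z t j - Z t k) r) := by
        rw [← hVr]; rfl
      rw [h2]
      exact h1
    have := ((PiLp.continuousLinearEquiv 2 ℝ (fun _ : Fin D => ℝ)).symm.hasFDerivAt).comp_hasDerivAt t hcomp
    simpa only [Function.comp_def, ContinuousLinearEquiv.coe_coe, ContinuousLinearEquiv.symm_apply_apply] using this
  · intro h k r t ht
    have hv := h k t ht
    have := (EuclideanSpace.proj (𝕜 := ℝ) r).hasFDerivAt.comp_hasDerivAt t hv
    have h2 : (EuclideanSpace.proj (𝕜 := ℝ) r)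
        (∑ j ∈ Finset.univ.filter (fun j => A k j = 1), c (Z t) k j • (Z t j - Z t k))
        = -(fderiv ℝ S (Z t) (Pi.single k (EuclideanSpace.single r (1 : ℝ)))) := by
      rw [hkey (Z t) k r, neg_neg]
      exact hVr (Z t) k r
    rw [h2] at this
    exact this
end

section
/- Let G be a simple undirected graph on n vertices with symmetric adjacency matrix A ∈ {0,1}^{n×n}, and let ψ̃_{ij} : ℝⁿ → ℝ be differentiable functions. Define S[Z] = (1/2) ∑_{ℓ=1}^{D} ∑_{i,j=1}^{n} A_{ij} ψ̃_{ij}(P_i(Z)) (z_j^ℓ − z_i^ℓ)², where P_i(Z) = (‖z_i − z_1‖², …, ‖z_i − z_n‖²). Then, without any further assumption on ψ̃, the partial derivative of S with respect to z_k^r equals ∑_{j,s=1}^{n} A_{kj} ∂_{p_s} ψ̃_{kj}(P_k(Z)) (z_k^r − z_s^r) ‖z_j − z_k‖² + ∑_{i,j=1}^{n} A_{ij} ∂_{p_k} ψ̃_{ij}(P_i(Z)) (z_k^r − z_i^r) ‖z_j − z_i‖² + ∑_{j=1}^{n} A_{kj} (ψ̃_{kj}(P_k(Z)) + ψ̃_{jk}(P_j(Z)))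 (z_k^r − z_j^r). -/
open scoped BigOperators

noncomputable abbrev pr (n D : ℕ) (i : Fin n) :
    (Fin n → EuclideanSpace ℝ (Fin D)) →L[ℝ] EuclideanSpace ℝ (Fin D) :=
  ContinuousLinearMap.proj i

theorem polyakov_aux (n : ℕ) (k : Fin n) (a f N : Fin n → Fin n → ℝ)
    (g : Fin n → Fin n → Fin n → ℝ) (u : Fin n → ℝ)
    (hasym : ∀ i j, a i j = a j i) :
    (1/2 : ℝ) * ∑ i : Fin n, ∑ j : Fin n,
        a i j * (f i j * (2 * (((if j = k then (1:ℝ) else 0) - if i = k then 1 else 0) * (u j - u i)))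
          + N i j * ∑ s : Fin n, 2 * (((if i = k then (1:ℝ) else 0) - if s = k then 1 else 0) * (u i - u s)) * g i j s)
      = (∑ j : Fin n, ∑ s : Fin n, a k j * g k j s * (u k - u s) * N k j)
        + (∑ i : Fin n, ∑ j : Fin n, a i j * g i j k * (u k - u i) * N i j)
        + ∑ j : Fin n, a k j * (f k j + f j k) * (u k - u j) := by
  classical
  have key : (1/2 : ℝ) * ∑ i : Fin n, ∑ j : Fin n,
        a i j * (f i j * (2 * (((if j = k then (1:ℝ) else 0) - if i = k then 1 else 0) * (u j - u i)))
          + N i j * ∑ s : Fin n, 2 * (((if i = k then (1:ℝ) else 0) - if s = k then 1 else 0) * (u i - u s)) * g i j s)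
      = ∑ i : Fin n, ∑ j : Fin n,
          (((if j = k then a i j * f i j * (u j - u i) else 0)
            - (if i = k then a i j * f i j * (u j - u i) else 0))
          + ∑ s : Fin n, ((if i = k then a i j * g i j s * (u i - u s) * N i j else 0)
              - (if s = k then a i j * g i j s * (u i - u s) * N i j else 0))) := by
    rw [Finset.mul_sum]
    refine Finset.sum_congr rfl fun i _ => ?_
    rw [Finset.mul_sum]
    refine Finset.sum_congr rfl fun j _ => ?_
    rw [Finset.mul_sum, mul_add, mul_add, Finset.mul_sum, Finset.mul_sum]
    congr 1
    · split_ifs <;> ring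
    · refine Finset.sum_congr rfl fun s _ => ?_
      split_ifs <;> ring
  rw [key]
  simp only [Finset.sum_add_distrib, Finset.sum_sub_distrib]
  have h1 : ∑ i : Fin n, ∑ j : Fin n, (if j = k then a i j * f i j * (u j - u i) else 0)
      = ∑ j : Fin n, a j k * f j k * (u k - u j) := by
    refine Finset.sum_congr rfl fun i _ => ?_
    simp
  have h2 : ∑ i : Fin n, ∑ j : Fin n, (if i = k then a i j * f i j * (u j - u i) else 0)
      = ∑ j : Fin n, a k j * f k j * (u j - u k) := by
    rw [Finset.sum_comm]
    refine Finset.sum_congr rfl fun j _ => ?_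
    simp
  have h3 : ∑ i : Fin n, ∑ j : Fin n, ∑ s : Fin n,
        (if i = k then a i j * g i j s * (u i - u s) * N i j else 0)
      = ∑ j : Fin n, ∑ s : Fin n, a k j * g k j s * (u k - u s) * N k j := by
    rw [Finset.sum_comm]
    refine Finset.sum_congr rfl fun j _ => ?_
    rw [Finset.sum_comm]
    refine Finset.sum_congr rfl fun s _ => ?_
    simp
  have h4 : ∑ i : Fin n, ∑ j : Fin n, ∑ s : Fin n,
        (if s = k then a i j * g i j s * (u i - u s) * N i j else 0)
      = -∑ i : Fin n, ∑ j : Fin n, a i j * g i j k * (u k - u i) * N i j := by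
    rw [← Finset.sum_neg_distrib]
    refine Finset.sum_congr rfl fun i _ => ?_
    rw [← Finset.sum_neg_distrib]
    refine Finset.sum_congr rfl fun j _ => ?_
    simp
    ring
  have h5 : ∑ j : Fin n, a k j * (f k j + f j k) * (u k - u j)
      = ∑ j : Fin n, a j k * f j k * (u k - u j) + ∑ j : Fin n, (- (a k j * f k j * (u j - u k))) := by
    rw [← Finset.sum_add_distrib]
    refine Finset.sum_congr rfl fun j _ => ?_
    rw [hasym j k]
    ring
  rw [h1, h2, h3, h4, h5, Finset.sum_neg_distrib]
  ring

/-- For a simple undirected graph with 0/1 symmetric adjacency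
matrix `A` and differentiable weights `ψ i j : ℝⁿ → ℝ`, the partial derivative of
the discrete Polyakov action
`S Z = (1/2) ∑_ℓ ∑_{i,j} A i j · ψ i j (P Z i) · (z_j^ℓ − z_i^ℓ)²`
with respect to `z_k^r` equals, with no further assumption on `ψ`,
`∑_{j,s} A k j ∂_{p_s} ψ k j (P Z k) (z_k^r − z_s^r) ‖z_j − z_k‖²
 + ∑_{i,j} A i j ∂_{p_k} ψ i j (P Z i) (z_k^r − z_i^r) ‖z_j − z_i‖²
 + ∑_j A k j (ψ k j (P Z k) + ψ j k (P Z j)) (z_k^r − z_j^r)`. -/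
theorem discrete_polyakov_partial_derivative_general
    (n D : ℕ)
    (A : Fin n → Fin n → ℝ)
    (hAsym : ∀ i j, A i j = A j i)
    (hAdiag : ∀ i, A i i = 0)
    (hA01 : ∀ i j, A i j = 0 ∨ A i j = 1)
    (ψ : Fin n → Fin n → (Fin n → ℝ) → ℝ)
    (hψdiff : ∀ i j, Differentiable ℝ (ψ i j))
    (P : (Fin n → EuclideanSpace ℝ (Fin D)) → Fin n → Fin n → ℝ)
    (hP : ∀ Z i s, P Z i s = ‖Z i - Z s‖ ^ 2)
    (S : (Fin n → EuclideanSpace ℝ (Fin D)) → ℝ)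
    (hS : ∀ Z, S Z = (1 / 2) * ∑ ℓ : Fin D, ∑ i : Fin n, ∑ j : Fin n,
        A i j * (ψ i j (P Z i) * (Z j ℓ - Z i ℓ) ^ 2))
    (Z : Fin n → EuclideanSpace ℝ (Fin D)) (k : Fin n) (r : Fin D) :
    fderiv ℝ S Z (Pi.single k (EuclideanSpace.single r (1 : ℝ))) =
      (∑ j : Fin n, ∑ s : Fin n,
          A k j * fderiv ℝ (ψ k j) (P Z k) (Pi.single s 1)
            * (Z k r - Z s r) * ‖Z j - Z k‖ ^ 2)
      + (∑ i : Fin n, ∑ j : Fin n,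
          A i j * fderiv ℝ (ψ i j) (P Z i) (Pi.single k 1)
            * (Z k r - Z i r) * ‖Z j - Z i‖ ^ 2)
      + (∑ j : Fin n,
          A k j * (ψ k j (P Z k) + ψ j k (P Z j)) * (Z k r - Z j r)) := by
  classical
  have hnorm : ∀ x : EuclideanSpace ℝ (Fin D), ‖x‖ ^ 2 = ∑ ℓ, (x ℓ) ^ 2 := by
    intro x
    rw [EuclideanSpace.norm_eq, Real.sq_sqrt (by positivity)]
    simp [sq_abs]
  have hPfun : ∀ W i, P W i = fun s => ‖W i - W s‖ ^ 2 := fun W i => funext fun s => hP W i s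
  -- rewrite S without the ℓ-sum
  have hSg : S = fun W => (1/2 : ℝ) * ∑ i : Fin n, ∑ j : Fin n,
      A i j * (ψ i j (fun s => ‖W i - W s‖ ^ 2) * ‖W j - W i‖ ^ 2) := by
    funext W
    rw [hS W]
    congr 1
    rw [Finset.sum_comm]
    refine Finset.sum_congr rfl fun i _ => ?_
    rw [Finset.sum_comm]
    refine Finset.sum_congr rfl fun j _ => ?_
    rw [hPfun, ← Finset.mul_sum, ← Finset.mul_sum, hnorm]
    congr 2
  -- derivatives
  set Qd : Fin n → ((Fin n → EuclideanSpace ℝ (Fin D)) →L[ℝ] (Fin n → ℝ)) := fun i =>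
    ContinuousLinearMap.pi fun s =>
      2 • (innerSL ℝ (Z i - Z s)).comp (pr n D i - pr n D s) with hQd
  have hQ : ∀ i, HasFDerivAt
      (fun W : Fin n → EuclideanSpace ℝ (Fin D) => fun s => ‖W i - W s‖ ^ 2) (Qd i) Z :=
    fun i => hasFDerivAt_pi.2 fun s =>
      HasFDerivAt.norm_sq ((hasFDerivAt_apply (𝕜 := ℝ) i Z).sub (hasFDerivAt_apply (𝕜 := ℝ) s Z))
  have hterm : ∀ i j, HasFDerivAt
      (fun W : Fin n → EuclideanSpace ℝ (Fin D) =>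
        A i j * (ψ i j (fun s => ‖W i - W s‖ ^ 2) * ‖W j - W i‖ ^ 2))
      (A i j • (ψ i j (P Z i) • (2 • (innerSL ℝ (Z j - Z i)).comp (pr n D j - pr n D i))
        + ‖Z j - Z i‖ ^ 2 • ((fderiv ℝ (ψ i j) (P Z i)).comp (Qd i)))) Z := by
    intro i j
    rw [hPfun Z i]
    have h1 : HasFDerivAt (fun W : Fin n → EuclideanSpace ℝ (Fin D) =>
        ψ i j (fun s => ‖W i - W s‖ ^ 2))
        ((fderiv ℝ (ψ i j) (fun s => ‖Z i - Z s‖ ^ 2)).comp (Qd i)) Z :=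
      ((hψdiff i j _).hasFDerivAt).comp Z (hQ i)
    have h2 : HasFDerivAt (fun W : Fin n → EuclideanSpace ℝ (Fin D) =>
        ‖W j - W i‖ ^ 2) (2 • (innerSL ℝ (Z j - Z i)).comp (pr n D j - pr n D i)) Z :=
      HasFDerivAt.norm_sq ((hasFDerivAt_apply (𝕜 := ℝ) j Z).sub (hasFDerivAt_apply (𝕜 := ℝ) i Z))
    exact (h1.mul h2).const_mul _
  have hg : HasFDerivAt S ((1/2 : ℝ) • ∑ i : Fin n, ∑ j : Fin n,
      A i j • (ψ i j (P Z i) • (2 • (innerSL ℝ (Z j - Z i)).comp (pr n D j - pr n D i))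
        + ‖Z j - Z i‖ ^ 2 • ((fderiv ℝ (ψ i j) (P Z i)).comp (Qd i)))) Z := by
    rw [hSg]
    exact (HasFDerivAt.fun_sum fun i _ => HasFDerivAt.fun_sum fun j _ => hterm i j).const_mul _
  rw [hg.fderiv]
  simp only [ContinuousLinearMap.smul_apply, ContinuousLinearMap.coe_sum', Finset.sum_apply,
    ContinuousLinearMap.add_apply, ContinuousLinearMap.comp_apply,
    ContinuousLinearMap.coe_smul', Pi.smul_apply]
  have hvinner : ∀ (m : Fin n) (x : EuclideanSpace ℝ (Fin D)),
      (inner ℝ x ((Pi.single k (EuclideanSpace.single r (1:ℝ)) :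
        Fin n → EuclideanSpace ℝ (Fin D)) m) : ℝ) = (if m = k then 1 else 0) * x r := by
    intro m x
    rcases eq_or_ne m k with h | h
    · subst h; simp [EuclideanSpace.inner_single_right]
    · simp [Pi.single_eq_of_ne h, h]
  have hsub : ∀ (a b : Fin n) (x : EuclideanSpace ℝ (Fin D)),
      innerSL ℝ x ((pr n D a - pr n D b) (Pi.single k (EuclideanSpace.single r (1:ℝ))))
        = ((if a = k then (1:ℝ) else 0) - if b = k then 1 else 0) * x r := by
    intro a b x
    simp only [ContinuousLinearMap.sub_apply, pr, ContinuousLinearMap.proj_apply,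
      innerSL_apply_apply, inner_sub_right, hvinner]
    ring
  have hLsum : ∀ (L : (Fin n → ℝ) →L[ℝ] ℝ) (p : Fin n → ℝ),
      L p = ∑ s, p s * L (Pi.single s 1) := by
    intro L p
    have hp : p = ∑ s, p s • (Pi.single s (1:ℝ) : Fin n → ℝ) := by
      funext t
      simp [Pi.single_apply]
    conv_lhs => rw [hp]
    rw [map_sum]
    simp
  have hfd : ∀ i j, (fderiv ℝ (ψ i j) (P Z i))
      ((Qd i) (Pi.single k (EuclideanSpace.single r (1:ℝ))))
      = ∑ s, (2 * (((if i = k then (1:ℝ) else 0) - if s = k then 1 else 0)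
          * (Z i r - Z s r))) * fderiv ℝ (ψ i j) (P Z i) (Pi.single s 1) := by
    intro i j
    have hQdv : (Qd i) (Pi.single k (EuclideanSpace.single r (1:ℝ)))
        = fun s => 2 * (((if i = k then (1:ℝ) else 0) - if s = k then 1 else 0)
            * (Z i r - Z s r)) := by
      funext s
      rw [hQd]
      simp only [ContinuousLinearMap.pi_apply, ContinuousLinearMap.smul_apply,
        ContinuousLinearMap.comp_apply, hsub, PiLp.sub_apply]
      push_cast [nsmul_eq_mul]
      ring
    rw [hQdv, hLsum]
  simp only [hfd, hsub, PiLp.sub_apply]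
  simp only [smul_eq_mul, nsmul_eq_mul, Nat.cast_ofNat]
  exact polyakov_aux n k A (fun i j => ψ i j (P Z i)) (fun i j => ‖Z j - Z i‖ ^ 2)
    (fun i j s => fderiv ℝ (ψ i j) (P Z i) (Pi.single s 1)) (fun i => Z i r) hAsym
end
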